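/- arXiv:1501.00163 — 9 statements merged into one kernel-verified Lean document; each statement's English description precedes it below -/
import Mathlib

section
/- Let μ_1(x), …, μ_L(x) ∈ F[x] be pairwise coprime monic polynomials such that μ_1(x)·…·μ_L(x) = M(x) and μ_i(x) divides m_i(x) for each i. Set M_i(x) = M(x)/μ_i(x), and let D_i(x) ∈ F[x] satisfy D_i(x)·M_i(x) ≡ 1 (mod μ_i(x)) whenever deg(μ_i) > 0, and D_i(x) = 0 whenever μ_i(x) = 1. Then every a(x) ∈ F[x] with deg(a) < deg(M) satisfies a(x) = [ Σ_{i=1}^{L} [a]_{m_i}(x)·D_i(x)·M_i(x) ]_{M(x)} (the Chinese Remainder Theorem reconstruction for non-pairwise coprime polynomial moduli). -/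
open Polynomial
open scoped Classical

/-!
Since the `μ i` are pairwise coprime with product `M`, it suffices to show that the sum `S`
is congruent to `a` modulo each `μ i`; as `deg a < deg M`, `S mod M` is then `a` itself.
Modulo `μ i` every summand with `j ≠ i` vanishes, because `μ i` divides `M / μ j`, while the
`i`-th summand is `[a]_{m_i} · (D_i M_i) ≡ a · 1`, because `μ i ∣ m i`.
-/

open Finset

theorem dvd_sum_mul_sub_of_dvd {ι R : Type*} [CommRing R] [Fintype ι] {μ r e : ι → R} {a : R}
    {i : ι} (hr : μ i ∣ r i - a) (he : μ i ∣ e i - 1) (hej : ∀ j ≠ i, μ i ∣ e j) :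
    μ i ∣ ∑ j, r j * e j - a := by
  have hsplit : ∑ j, r j * e j - a
      = r i * (e i - 1) + (r i - a) + ∑ j ∈ univ.erase i, r j * e j := by
    rw [← add_sum_erase _ _ (mem_univ i)]; ring
  rw [hsplit]
  exact dvd_add (dvd_add (dvd_mul_of_dvd_right he _) hr)
    (dvd_sum fun j hj => dvd_mul_of_dvd_right (hej j (ne_of_mem_erase hj)) _)

namespace Polynomial

variable {R : Type*} [CommRing R]

theorem modByMonic_eq_of_dvd_sub_of_degree_lt [Nontrivial R] {p q r : R[X]} (hq : q.Monic)
    (h : q ∣ p - r) (hr : r.degree < q.degree) : p %ₘ q = r := by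
  rw [modByMonic_eq_of_dvd_sub hq h, (modByMonic_eq_self_iff hq).2 hr]

theorem prod_divByMonic_eq_prod_erase {ι : Type*} [Fintype ι] [DecidableEq ι] {μ : ι → R[X]}
    (hμ : ∀ i, (μ i).Monic) (j : ι) : (∏ i, μ i) /ₘ μ j = ∏ i ∈ univ.erase j, μ i := by
  rw [← mul_prod_erase univ μ (mem_univ j), mul_divByMonic_cancel_left _ (hμ j)]

end Polynomial

theorem stmt1_general {F : Type*} [Field F] {L : ℕ}
    (m : Fin L → Polynomial F)
    (μ : Fin L → Polynomial F)
    (hμmonic : ∀ i, (μ i).Monic)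
    (hμcop : ∀ i j, i ≠ j → IsCoprime (μ i) (μ j))
    (hμprod : ∏ i, μ i = Finset.univ.lcm m)
    (hμdvd : ∀ i, μ i ∣ m i)
    (D : Fin L → Polynomial F)
    (hD : ∀ i, 0 < (μ i).degree →
      μ i ∣ D i * (Finset.univ.lcm m /ₘ μ i) - 1)
    (a : Polynomial F)
    (ha : a.degree < (Finset.univ.lcm m).degree) :
    a = (∑ i, (a %ₘ m i) * D i * (Finset.univ.lcm m /ₘ μ i)) %ₘ Finset.univ.lcm m := by
  rw [← hμprod] at hD ha ⊢
  have hMmonic : (∏ i, μ i).Monic := monic_prod_of_monic _ _ fun i _ => hμmonic i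
  refine (modByMonic_eq_of_dvd_sub_of_degree_lt hMmonic ?_ ha).symm
  refine Fintype.prod_dvd_of_coprime (fun i j hij => hμcop i j hij) fun i => ?_
  simp_rw [mul_assoc]
  refine dvd_sum_mul_sub_of_dvd ((hμdvd i).trans (dvd_modByMonic_sub a (m i))) ?_ ?_
  · by_cases hμ1 : μ i = 1
    · rw [hμ1]; exact one_dvd _
    · exact hD i ((hμmonic i).degree_pos.2 hμ1)
  · intro j hji
    rw [prod_divByMonic_eq_prod_erase hμmonic]
    exact dvd_mul_of_dvd_right (dvd_prod_of_mem μ (mem_erase.2 ⟨hji.symm, mem_univ i⟩)) _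

/-- The Chinese Remainder Theorem reconstruction formula for
non-pairwise coprime polynomial moduli:
`a = [ Σ_i [a]_{m_i} · D_i · M_i ]_M`, where `M_i = M / μ_i` and
`D_i · M_i ≡ 1 (mod μ_i)` (with `D_i = 0` when `μ_i = 1`). -/
theorem stmt1 {F : Type*} [Field F] {L : ℕ} (hL : 2 ≤ L)
    (m : Fin L → Polynomial F)
    (hmonic : ∀ i, (m i).Monic)
    (hdist : Function.Injective m)
    (hdeg : ∀ i, 0 < (m i).degree)
    (μ : Fin L → Polynomial F)
    (hμmonic : ∀ i, (μ i).Monic)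
    (hμcop : ∀ i j, i ≠ j → IsCoprime (μ i) (μ j))
    (hμprod : ∏ i, μ i = Finset.univ.lcm m)
    (hμdvd : ∀ i, μ i ∣ m i)
    (D : Fin L → Polynomial F)
    (hD : ∀ i, 0 < (μ i).degree →
      μ i ∣ D i * (Finset.univ.lcm m /ₘ μ i) - 1)
    (hD0 : ∀ i, μ i = 1 → D i = 0)
    (a : Polynomial F)
    (ha : a.degree < (Finset.univ.lcm m).degree) :
    a = (∑ i, (a %ₘ m i) * D i * (Finset.univ.lcm m /ₘ μ i)) %ₘ Finset.univ.lcm m :=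
  stmt1_general m μ hμmonic hμcop hμprod hμdvd D hD a ha
end

section
/- Write M(x) = p_1(x)^{t_1}·p_2(x)^{t_2}·…·p_K(x)^{t_K}, where p_1(x), …, p_K(x) ∈ F[x] are pairwise distinct monic irreducible polynomials and each t_i is a positive integer. For 1 ≤ i ≤ K, let d_i be the number of indices j ∈ {1, …, L} such that p_i(x)^{t_i} divides m_j(x). Then the code distance of the polynomial remainder code with moduli m_1(x), …, m_L(x) equals min{d_1, d_2, …, d_K}. -/
/-! The distance is attained by `M / p_i`, and any word `c` of degree below `deg M` misses some
`p_i ^ t_i`, hence is not divisible by any modulus that `p_i ^ t_i` divides. -/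

open Polynomial
open scoped Classical

/-- The code distance of the polynomial remainder code with moduli `m i`, `i ∈ s`:
the minimum over nonzero `a` with `deg a < deg (lcm of moduli)` of the number of
indices `i ∈ s` with `¬ m i ∣ a`. -/
noncomputable def codeDist {F : Type*} [Field F] {ι : Type*} (s : Finset ι)
    (m : ι → Polynomial F) : ℕ :=
  sInf {k | ∃ a : Polynomial F, a ≠ 0 ∧ a.degree < (s.lcm m).degree ∧
    (s.filter fun i => ¬ m i ∣ a).card = k}

open Function

theorem Nat.sInf_eq_sInf_of_subset_of_forall_exists_le {S R : Set ℕ} (hRS : R ⊆ S)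
    (h : ∀ s ∈ S, ∃ r ∈ R, r ≤ s) : sInf S = sInf R := by
  rcases S.eq_empty_or_nonempty with rfl | hS
  · rw [Set.subset_empty_iff.mp hRS]
  obtain ⟨r, hr, hrS⟩ := h _ (Nat.sInf_mem hS)
  exact le_antisymm (Nat.sInf_le (hRS (Nat.sInf_mem ⟨r, hr⟩)))
    ((Nat.sInf_le hr).trans hrS)

theorem Prime.dvd_cofactor_iff_not_pow_dvd {α : Type*} [CommMonoidWithZero α]
    [IsCancelMulZero α] {p a b m M : α} {t : ℕ} (hp : Prime p) (hMb : M = p ^ t * b) (hb : ¬ p ∣ b)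
    (hMa : M = p * a) (hm : m ∣ M) : m ∣ a ↔ ¬ p ^ t ∣ m := by
  obtain ⟨q, hq⟩ := hm
  have hM0 : M ≠ 0 := hMb ▸ mul_ne_zero (pow_ne_zero _ hp.ne_zero) (by rintro rfl; simp at hb)
  have hm0 : m ≠ 0 := by rintro rfl; simp_all
  -- Both sides say that `p` divides the cofactor `q = M / m`.
  have hdvd_a : m ∣ a ↔ p ∣ q := by
    rw [← mul_dvd_mul_iff_right hp.ne_zero, mul_comm a, ← hMa, hq, mul_dvd_mul_iff_left hm0]
  rw [hdvd_a]
  constructor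
  · intro hpq hpm
    have : p ^ t * p ∣ p ^ t * b := hMb ▸ hq ▸ mul_dvd_mul hpm hpq
    exact hb ((mul_dvd_mul_iff_left (pow_ne_zero _ hp.ne_zero)).mp this)
  · intro hpm
    by_contra hpq
    exact hpm (hp.pow_dvd_of_dvd_mul_right t hpq (hq ▸ hMb ▸ dvd_mul_right _ _))

theorem exists_prod_pow_eq_pow_mul_and_not_dvd {ι R : Type*} [CommRing R] {s : Finset ι}
    {p : ι → R} (hp : (s : Set ι).Pairwise (IsCoprime on p)) {i : ι} (hi : i ∈ s)
    (hu : ¬ IsUnit (p i)) (t : ι → ℕ) :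
    ∃ b, ∏ k ∈ s, p k ^ t k = p i ^ t i * b ∧ ¬ p i ∣ b := by
  refine ⟨∏ k ∈ s.erase i, p k ^ t k, (Finset.mul_prod_erase s _ hi).symm, fun h => hu ?_⟩
  refine IsCoprime.isUnit_of_dvd' (IsCoprime.prod_right fun k hk => ?_) dvd_rfl h
  exact (hp hi (Finset.mem_of_mem_erase hk) (Finset.ne_of_mem_erase hk).symm).pow_right

theorem exists_not_pow_dvd_of_not_prod_pow_dvd {ι R : Type*} [CommRing R] {s : Finset ι}
    {p : ι → R} (hp : (s : Set ι).Pairwise (IsCoprime on p)) {t : ι → ℕ} {c : R}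
    (h : ¬ ∏ k ∈ s, p k ^ t k ∣ c) : ∃ i ∈ s, ¬ p i ^ t i ∣ c := by
  contrapose! h
  exact Finset.prod_dvd_of_coprime (hp.mono' fun _ _ h => h.pow) h

namespace Polynomial

variable {F : Type*} [Field F]

theorem pairwise_isCoprime_of_monic_of_irreducible {ι : Type*} {p : ι → F[X]}
    (hmonic : ∀ i, (p i).Monic) (hirr : ∀ i, Irreducible (p i)) (hinj : Function.Injective p) :
    Pairwise (IsCoprime on p) := fun i j hij =>
  (hirr i).coprime_iff_not_dvd.2 fun h => hij <| hinj <|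
    eq_of_monic_of_associated (hmonic i) (hmonic j) ((hirr i).associated_of_dvd (hirr j) h)

theorem degree_lt_degree_of_irreducible_mul {p a : F[X]} (hp : Irreducible p) (ha : a ≠ 0) :
    a.degree < (p * a).degree := by
  apply degree_lt_degree
  rw [natDegree_mul hp.ne_zero ha]
  have := hp.natDegree_pos
  omega

end Polynomial

theorem stmt2_general {F : Type*} [Field F] {L : ℕ}
    (m : Fin L → Polynomial F)
    {K : ℕ}
    (p : Fin K → Polynomial F) (t : Fin K → ℕ)
    (hpmonic : ∀ i, (p i).Monic)
    (hpirr : ∀ i, Irreducible (p i))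
    (hpdist : Function.Injective p)
    (ht : ∀ i, 0 < t i)
    (hM : Finset.univ.lcm m = ∏ i, p i ^ t i) :
    codeDist Finset.univ m =
      sInf (Set.range fun i : Fin K =>
        (Finset.univ.filter fun j : Fin L => p i ^ t i ∣ m j).card) := by
  have hcop : ((Finset.univ : Finset (Fin K)) : Set (Fin K)).Pairwise (IsCoprime on p) :=
    fun i _ j _ hij => pairwise_isCoprime_of_monic_of_irreducible hpmonic hpirr hpdist hij
  apply Nat.sInf_eq_sInf_of_subset_of_forall_exists_le
  · rintro _ ⟨i, rfl⟩
    obtain ⟨b, hMb, hb⟩ := exists_prod_pow_eq_pow_mul_and_not_dvd hcop (Finset.mem_univ i)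
      (hpirr i).not_isUnit t
    obtain ⟨a, hMa⟩ : p i ∣ Finset.univ.lcm m :=
      hM ▸ hMb ▸ (dvd_pow_self _ (ht i).ne').mul_right b
    have ha0 : a ≠ 0 := right_ne_zero_of_mul <| hMa ▸ hM ▸
      Finset.prod_ne_zero_iff.mpr fun k _ => pow_ne_zero _ (hpirr k).ne_zero
    refine ⟨a, ha0, hMa ▸ degree_lt_degree_of_irreducible_mul (hpirr i) ha0, ?_⟩
    exact congrArg Finset.card <| Finset.filter_congr fun j _ =>
      ((hpirr i).prime.dvd_cofactor_iff_not_pow_dvd (hM.trans hMb) hb hMa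
        (Finset.dvd_lcm (Finset.mem_univ j))).not_left
  · rintro _ ⟨c, hc0, hcdeg, rfl⟩
    obtain ⟨i, -, hi⟩ := exists_not_pow_dvd_of_not_prod_pow_dvd hcop
      (hM ▸ fun h => (degree_le_of_dvd h hc0).not_gt hcdeg)
    refine ⟨_, ⟨i, rfl⟩, Finset.card_le_card fun j => ?_⟩
    simp only [Finset.mem_filter]
    exact fun ⟨hj, hpm⟩ => ⟨hj, fun hmc => hi (hpm.trans hmc)⟩

/-- If `M = p_1^{t_1} ⋯ p_K^{t_K}` with `p_i` pairwise distinct monic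
irreducible and `t_i ≥ 1`, and `d_i` is the number of moduli divisible by `p_i^{t_i}`,
then the code distance equals `min{d_1, …, d_K}`. -/
theorem stmt2 {F : Type*} [Field F] {L : ℕ} (hL : 2 ≤ L)
    (m : Fin L → Polynomial F)
    (hmonic : ∀ i, (m i).Monic)
    (hdist : Function.Injective m)
    (hdeg : ∀ i, 0 < (m i).degree)
    {K : ℕ} (hK : 0 < K)
    (p : Fin K → Polynomial F) (t : Fin K → ℕ)
    (hpmonic : ∀ i, (p i).Monic)
    (hpirr : ∀ i, Irreducible (p i))
    (hpdist : Function.Injective p)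
    (ht : ∀ i, 0 < t i)
    (hM : Finset.univ.lcm m = ∏ i, p i ^ t i) :
    codeDist Finset.univ m =
      sInf (Set.range fun i : Fin K =>
        (Finset.univ.filter fun j : Fin L => p i ^ t i ∣ m j).card) :=
  stmt2_general m p t hpmonic hpirr hpdist ht hM
end

section
/- Let d be the code distance of the polynomial remainder code with moduli m_1(x), …, m_L(x). Let a(x) ∈ F[x] with deg(a) < deg(M), and for each i ∈ {1, …, L} let ã_i(x) ∈ F[x] satisfy deg(ã_i) < deg(m_i); set e_i(x) = ã_i(x) − [a]_{m_i}(x). Call a pair {i, j} with i ≠ j a failed consistency check if gcd(m_i(x), m_j(x)) does not divide ã_i(x) − ã_j(x). If the number of indices i with e_i(x) ≠ 0 is at most ⌊(d−1)/2⌋, then: (i) every index i with e_i(x) ≠ 0 belongs to at least ⌈(d−1)/2⌉ + 1 failed consistency checks; and (ii) every index i with e_i(x) = 0 belongs to at most ⌊(d−1)/2⌋ failed consistency checks. -/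
/-!
Since `[a]_{m_i} ≡ [a]_{m_j} (mod gcd(m_i, m_j))`, the check `{i, j}` fails exactly when
`gcd(m_i, m_j) ∤ e_i − e_j`; so a correct residue can only fail against erroneous ones.
If an erroneous residue `i` passes the checks against a set `T` of correct residues, then
`gcd(m_i, lcm_T m) ∣ e_i` by distributivity of the divisibility lattice, and since `e_i ≠ 0`
has degree `< deg m_i`, `m_i ∤ lcm_T m`. Thus `lcm_T m` is a nonzero polynomial of degree
`< deg M` divisible by all `m_j`, `j ∈ T`, and the definition of `d` gives `|T| ≤ L − d`:
at least `d − ⌊(d−1)/2⌋` correct residues fail against `i`.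
-/

open Polynomial
open scoped Classical

namespace Associates

variable {α : Type*} [CommMonoidWithZero α] [UniqueFactorizationMonoid α]

theorem factors_inf [Nontrivial α] (a b : Associates α) :
    (a ⊓ b).factors = a.factors ⊓ b.factors :=
  prod_factors _

theorem factors_sup [Nontrivial α] (a b : Associates α) :
    (a ⊔ b).factors = a.factors ⊔ b.factors :=
  prod_factors _

noncomputable instance : DistribLattice (Associates α) :=
  DistribLattice.ofInfSupLe fun a b c => by
    nontriviality α
    rw [← factors_le, factors_inf, factors_sup, factors_sup, factors_inf, factors_inf,
      inf_sup_left]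

variable [GCDMonoid α]

theorem mk_gcd (a b : α) : Associates.mk (gcd a b) = Associates.mk a ⊓ Associates.mk b := by
  refine le_antisymm (le_inf (mk_le_mk_of_dvd (gcd_dvd_left a b))
    (mk_le_mk_of_dvd (gcd_dvd_right a b))) ?_
  obtain ⟨c, hc⟩ := exists_rep (Associates.mk a ⊓ Associates.mk b)
  rw [← hc, mk_le_mk_iff_dvd]
  exact dvd_gcd (mk_le_mk_iff_dvd.1 (hc ▸ inf_le_left)) (mk_le_mk_iff_dvd.1 (hc ▸ inf_le_right))

theorem mk_lcm (a b : α) : Associates.mk (lcm a b) = Associates.mk a ⊔ Associates.mk b := by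
  refine le_antisymm ?_ (sup_le (mk_le_mk_of_dvd (dvd_lcm_left a b))
    (mk_le_mk_of_dvd (dvd_lcm_right a b)))
  obtain ⟨c, hc⟩ := exists_rep (Associates.mk a ⊔ Associates.mk b)
  rw [← hc, mk_le_mk_iff_dvd]
  exact lcm_dvd (mk_le_mk_iff_dvd.1 (hc ▸ le_sup_left)) (mk_le_mk_iff_dvd.1 (hc ▸ le_sup_right))

end Associates

theorem gcd_lcm_dvd_of_gcd_dvd {α : Type*} [CommMonoidWithZero α] [UniqueFactorizationMonoid α]
    [GCDMonoid α] {a b c d : α} (hb : gcd a b ∣ d) (hc : gcd a c ∣ d) :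
    gcd a (lcm b c) ∣ d := by
  rw [← Associates.mk_le_mk_iff_dvd, Associates.mk_gcd, Associates.mk_lcm, inf_sup_left,
    ← Associates.mk_gcd, ← Associates.mk_gcd]
  exact sup_le (Associates.mk_le_mk_of_dvd hb) (Associates.mk_le_mk_of_dvd hc)

theorem gcd_finset_lcm_dvd {α ι : Type*} [CommMonoidWithZero α]
    [UniqueFactorizationMonoid α] [NormalizedGCDMonoid α] {s : Finset ι} {f : ι → α} {a d : α}
    (h : ∀ j ∈ s, gcd a (f j) ∣ d) : gcd a (s.lcm f) ∣ d := by
  induction s using Finset.induction with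
  | empty => exact (gcd_dvd_right a 1).trans (one_dvd d)
  | insert j s _ ih =>
    rw [Finset.lcm_insert]
    exact gcd_lcm_dvd_of_gcd_dvd (h j (Finset.mem_insert_self j s))
      (ih fun k hk => h k (Finset.mem_insert_of_mem hk))

section RemainderCode

variable {F : Type*} [Field F]

theorem gcd_dvd_modByMonic_sub_modByMonic (a p q : F[X]) : gcd p q ∣ a %ₘ p - a %ₘ q := by
  have h : a %ₘ p - a %ₘ q = q * (a /ₘ q) - p * (a /ₘ p) := by
    rw [modByMonic_eq_sub_mul_div, modByMonic_eq_sub_mul_div]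
    ring
  rw [h]
  exact dvd_sub ((gcd_dvd_right p q).mul_right _) ((gcd_dvd_left p q).mul_right _)

variable {ι : Type*} {m : ι → F[X]}

theorem gcd_dvd_sub_iff_of_eq_sub_modByMonic {a : F[X]} {r e : ι → F[X]}
    (he : ∀ i, e i = r i - a %ₘ m i) (i j : ι) :
    gcd (m i) (m j) ∣ r i - r j ↔ gcd (m i) (m j) ∣ e i - e j := by
  have h : r i - r j = (e i - e j) + (a %ₘ m i - a %ₘ m j) := by
    rw [he, he]
    ring
  rw [h, dvd_add_left (gcd_dvd_modByMonic_sub_modByMonic a _ _)]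

theorem codeDist_le_card_filter {s : Finset ι} {u : F[X]} (hu : u ≠ 0)
    (hdeg : u.degree < (s.lcm m).degree) :
    codeDist s m ≤ (s.filter fun i => ¬ m i ∣ u).card :=
  Nat.sInf_le ⟨u, hu, hdeg, rfl⟩

variable [Fintype ι]

theorem codeDist_add_card_le (hm : ∀ j, m j ≠ 0) {T : Finset ι} {i : ι}
    (hi : ¬ m i ∣ T.lcm m) :
    codeDist Finset.univ m + T.card ≤ Fintype.card ι := by
  have hM : Finset.univ.lcm m ≠ 0 := Finset.lcm_ne_zero_iff.2 fun j _ => hm j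
  have hN : T.lcm m ≠ 0 := fun h => hi (h ▸ dvd_zero _)
  have hNM : T.lcm m ∣ Finset.univ.lcm m := Finset.lcm_mono (Finset.subset_univ T)
  have hdeg : (T.lcm m).degree < (Finset.univ.lcm m).degree :=
    (degree_le_of_dvd hNM hM).lt_of_ne fun h => hi <|
      (Finset.dvd_lcm (Finset.mem_univ i)).trans (associated_of_dvd_of_degree_eq hNM h).symm.dvd
  have hsub : (Finset.univ.filter fun k => ¬ m k ∣ T.lcm m) ⊆ Tᶜ := fun k hk =>
    Finset.mem_compl.2 fun hkT => (Finset.mem_filter.1 hk).2 (Finset.dvd_lcm hkT)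
  calc codeDist Finset.univ m + T.card ≤ Tᶜ.card + T.card :=
        Nat.add_le_add_right ((codeDist_le_card_filter hN hdeg).trans (Finset.card_le_card hsub)) _
    _ = Fintype.card ι := Finset.card_compl_add_card T

theorem codeDist_add_card_le_of_gcd_dvd (hm : ∀ j, m j ≠ 0) {i : ι} {c : F[X]} (hc : c ≠ 0)
    (hcdeg : c.degree < (m i).degree) {T : Finset ι} (hT : ∀ j ∈ T, gcd (m i) (m j) ∣ c) :
    codeDist Finset.univ m + T.card ≤ Fintype.card ι :=
  codeDist_add_card_le hm fun hdvd =>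
    not_dvd_of_degree_lt hc hcdeg ((dvd_gcd dvd_rfl hdvd).trans (gcd_finset_lcm_dvd hT))

variable [DecidableEq ι]

/- `DecidableEq ι` instead of classical decidability makes `failedChecks m r i` definitionally
the filter written out in `stmt3` when `ι = Fin L`. -/
variable (m) in
noncomputable def failedChecks (c : ι → F[X]) (i : ι) : Finset ι :=
  Finset.univ.filter fun j => j ≠ i ∧ ¬ gcd (m i) (m j) ∣ c i - c j

theorem failedChecks_eq_of_eq_sub_modByMonic {a : F[X]} {r e : ι → F[X]}
    (he : ∀ i, e i = r i - a %ₘ m i) : failedChecks m r = failedChecks m e := by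
  ext i j
  simp only [failedChecks, Finset.mem_filter, gcd_dvd_sub_iff_of_eq_sub_modByMonic he]

variable {e : ι → F[X]} {i : ι}

theorem card_failedChecks_le_of_eq_zero (hei : e i = 0) :
    (failedChecks m e i).card ≤ (Finset.univ.filter fun j => e j ≠ 0).card :=
  Finset.card_le_card fun j hj => Finset.mem_filter.2 ⟨Finset.mem_univ j, fun hej =>
    (Finset.mem_filter.1 hj).2.2 (by rw [hei, hej, sub_zero]; exact dvd_zero _)⟩

theorem codeDist_sub_card_le_card_failedChecks (hm : ∀ j, m j ≠ 0) (hei : e i ≠ 0)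
    (hdeg : (e i).degree < (m i).degree) :
    codeDist Finset.univ m - (Finset.univ.filter fun j => e j ≠ 0).card ≤
      (failedChecks m e i).card := by
  set passed := Finset.univ.filter fun j => e j = 0 ∧ gcd (m i) (m j) ∣ e i
  have hpassed : codeDist Finset.univ m + passed.card ≤ Fintype.card ι :=
    codeDist_add_card_le_of_gcd_dvd hm hei hdeg fun j hj => (Finset.mem_filter.1 hj).2.2
  have hcorrect : (Finset.univ.filter fun j => e j = 0) ⊆ passed ∪ failedChecks m e i := by
    intro j hj
    have hej : e j = 0 := (Finset.mem_filter.1 hj).2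
    by_cases hg : gcd (m i) (m j) ∣ e i
    · exact Finset.mem_union_left _ (Finset.mem_filter.2 ⟨Finset.mem_univ j, hej, hg⟩)
    · refine Finset.mem_union_right _ (Finset.mem_filter.2 ⟨Finset.mem_univ j, ?_, ?_⟩)
      · rintro rfl
        exact hei hej
      · rwa [hej, sub_zero]
  have hsplit : (Finset.univ.filter fun j => e j = 0).card +
      (Finset.univ.filter fun j => e j ≠ 0).card = Fintype.card ι := by
    simpa using Finset.card_filter_add_card_filter_not (s := Finset.univ) (fun j => e j = 0)
  have := (Finset.card_le_card hcorrect).trans (Finset.card_union_le _ _)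
  omega

end RemainderCode

theorem stmt3_general {F : Type*} [Field F] {L : ℕ}
    (m : Fin L → Polynomial F)
    (hmonic : ∀ i, (m i).Monic)
    (d : ℕ) (hd : d = codeDist Finset.univ m)
    (a : Polynomial F)
    (r : Fin L → Polynomial F)
    (hr : ∀ i, (r i).degree < (m i).degree)
    (e : Fin L → Polynomial F)
    (he : ∀ i, e i = r i - a %ₘ m i)
    (herrs : (Finset.univ.filter fun i => e i ≠ 0).card ≤ (d - 1) / 2) :
    (∀ i, e i ≠ 0 →
      ((d - 1) + 1) / 2 + 1 ≤
        (Finset.univ.filter fun j =>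
          j ≠ i ∧ ¬ gcd (m i) (m j) ∣ r i - r j).card) ∧
    (∀ i, e i = 0 →
      (Finset.univ.filter fun j =>
        j ≠ i ∧ ¬ gcd (m i) (m j) ∣ r i - r j).card ≤ (d - 1) / 2) := by
  subst hd
  change (∀ i, e i ≠ 0 → _ ≤ (failedChecks m r i).card) ∧
    ∀ i, e i = 0 → (failedChecks m r i).card ≤ _
  rw [failedChecks_eq_of_eq_sub_modByMonic he]
  refine ⟨fun i hei => ?_, fun i hei => (card_failedChecks_le_of_eq_zero hei).trans herrs⟩
  have hedeg : (e i).degree < (m i).degree := he i ▸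
    (degree_sub_le _ _).trans_lt (max_lt (hr i) (degree_modByMonic_lt a (hmonic i)))
  have hfailed := codeDist_sub_card_le_card_failedChecks (fun j => (hmonic j).ne_zero) hei hedeg
  have herr : 0 < (Finset.univ.filter fun j => e j ≠ 0).card :=
    Finset.card_pos.2 ⟨i, Finset.mem_filter.2 ⟨Finset.mem_univ i, hei⟩⟩
  omega

/-- If at most `⌊(d−1)/2⌋` residues are in error, then every erroneous
residue appears in at least `⌈(d−1)/2⌉ + 1` failed consistency checks, and every
correct residue appears in at most `⌊(d−1)/2⌋` failed consistency checks.
Here `r i` are the received residues and `e i` the residue errors. -/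
theorem stmt3 {F : Type*} [Field F] {L : ℕ} (hL : 2 ≤ L)
    (m : Fin L → Polynomial F)
    (hmonic : ∀ i, (m i).Monic)
    (hdist : Function.Injective m)
    (hdeg : ∀ i, 0 < (m i).degree)
    (d : ℕ) (hd : d = codeDist Finset.univ m)
    (a : Polynomial F) (ha : a.degree < (Finset.univ.lcm m).degree)
    (r : Fin L → Polynomial F)
    (hr : ∀ i, (r i).degree < (m i).degree)
    (e : Fin L → Polynomial F)
    (he : ∀ i, e i = r i - a %ₘ m i)
    (herrs : (Finset.univ.filter fun i => e i ≠ 0).card ≤ (d - 1) / 2) :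
    (∀ i, e i ≠ 0 →
      ((d - 1) + 1) / 2 + 1 ≤
        (Finset.univ.filter fun j =>
          j ≠ i ∧ ¬ gcd (m i) (m j) ∣ r i - r j).card) ∧
    (∀ i, e i = 0 →
      (Finset.univ.filter fun j =>
        j ≠ i ∧ ¬ gcd (m i) (m j) ∣ r i - r j).card ≤ (d - 1) / 2) :=
  stmt3_general m hmonic d hd a r hr e he herrs
end

section
/- Let τ be a nonnegative integer with τ < deg(m_i) for all i ∈ {1, …, L} and τ < τ_{1(⌊(w^{(1)} − 1)/2⌋ + 1)}. Then every c(x) ∈ F[x] with deg(c) < deg(M) such that deg([c]_{m_i}) ≤ τ for all i ∈ {1, …, L} satisfies deg(c) ≤ τ. (Equivalently: whenever all residues of a polynomial a(x) with deg(a) < deg(M) are corrupted by errors of degree at most τ, the folding polynomial k_1(x) determined by a = k_1·m_1 + [a]_{m_1} is uniquely recoverable from the corrupted residues, giving a reconstruction whose error has degree at most τ.) -/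
open Polynomial
open scoped Classical

/-- The `j`-th smallest element (1-indexed) of a multiset of natural numbers. -/
noncomputable def nthSmallest (s : Multiset ℕ) (j : ℕ) : ℕ :=
  (s.sort (· ≤ ·)).getD (j - 1) 0

/-! Write `c = m₁ k + [c]_{m₁}`. Whenever `τ_{1j} > τ`, the residues `[c]_{m₁}` and
`[c]_{m_j}` agree modulo `gcd(m₁, m_j)` and have degree at most `τ`, so they coincide; then
`m_j ∣ m₁ k`, i.e. `Γ_{j1} ∣ k`. Hence `k`, whose degree is below that of `lcm_j Γ_{j1}`, is a
word of the remainder code with moduli `Γ_{j1}` that is nonzero only at indices with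
`τ_{1j} ≤ τ`. The hypothesis on `τ` leaves at most `⌊(w⁽¹⁾ - 1)/2⌋` such indices, fewer than
the code distance, so `k = 0` and `c = [c]_{m₁}` has degree at most `τ`. -/

theorem List.length_filter_le_of_lt_getD {l : List ℕ} (hl : l.Pairwise (· ≤ ·)) {b τ : ℕ}
    (h : τ < l.getD b 0) : (l.filter (· ≤ τ)).length ≤ b := by
  have hb : b < l.length := by
    by_contra! hb
    rw [List.getD_eq_default _ _ hb] at h
    exact Nat.not_lt_zero τ h
  rw [List.getD_eq_getElem _ _ hb] at h
  have hdrop : (l.drop b).filter (· ≤ τ) = [] := by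
    have hsorted := hl.sublist (List.drop_sublist b l)
    rw [List.drop_eq_getElem_cons hb, List.pairwise_cons] at hsorted
    rw [List.drop_eq_getElem_cons hb, List.filter_eq_nil_iff]
    rintro x (_ | ⟨_, hx⟩)
    · simpa using h
    · simpa using h.trans_le (hsorted.1 x hx)
  calc (l.filter (· ≤ τ)).length
      = ((l.take b).filter (· ≤ τ)).length := by
        rw [← List.take_append_drop b l, List.filter_append, hdrop, List.append_nil,
          List.take_append_drop]
    _ ≤ (l.take b).length := List.length_filter_le _ _
    _ ≤ b := List.length_take_le _ _

theorem card_filter_le_of_lt_nthSmallest {s : Multiset ℕ} {b τ : ℕ}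
    (h : τ < nthSmallest s (b + 1)) : (s.filter (· ≤ τ)).card ≤ b := by
  rw [← Multiset.sort_eq s (· ≤ ·), Multiset.filter_coe, Multiset.coe_card]
  exact List.length_filter_le_of_lt_getD (Multiset.pairwise_sort s _) h

namespace Polynomial

variable {F : Type*} [Field F]

theorem monic_gcd_of_monic_left {p : F[X]} (hp : p.Monic) (q : F[X]) : (gcd p q).Monic := by
  simpa only [normalize_gcd] using monic_normalize (gcd_ne_zero_of_left hp.ne_zero (b := q))

theorem gcd_mul_divByMonic_gcd {p : F[X]} (hp : p.Monic) (q : F[X]) :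
    gcd p q * (q /ₘ gcd p q) = q := by
  rw [divByMonic_eq_div _ (monic_gcd_of_monic_left hp q)]
  exact EuclideanDomain.mul_div_cancel' (gcd_ne_zero_of_left hp.ne_zero) (gcd_dvd_right p q)

theorem dvd_mul_divByMonic_gcd {p : F[X]} (hp : p.Monic) (q : F[X]) :
    q ∣ p * (q /ₘ gcd p q) := by
  conv_lhs => rw [← gcd_mul_divByMonic_gcd hp q]
  exact mul_dvd_mul_right (gcd_dvd_left p q) _

theorem divByMonic_gcd_dvd_of_dvd_mul {p q k : F[X]} (hp : p.Monic) (h : q ∣ p * k) :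
    q /ₘ gcd p q ∣ k := by
  have hd : gcd p q ≠ 0 := gcd_ne_zero_of_left hp.ne_zero
  rw [divByMonic_eq_div _ (monic_gcd_of_monic_left hp q)]
  refine (isCoprime_div_gcd_div_gcd_of_gcd_ne_zero hd).symm.dvd_of_dvd_mul_left ?_
  rwa [← mul_dvd_mul_iff_left hd, ← mul_assoc,
    EuclideanDomain.mul_div_cancel' hd (gcd_dvd_left p q),
    EuclideanDomain.mul_div_cancel' hd (gcd_dvd_right p q)]

theorem dvd_sub_modByMonic (c p : F[X]) : p ∣ c - c %ₘ p :=
  ⟨c /ₘ p, sub_eq_iff_eq_add'.mpr (modByMonic_add_div c p).symm⟩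

theorem modByMonic_eq_of_degree_lt_degree_gcd {p q c : F[X]} {n : WithBot ℕ}
    (hp : (c %ₘ p).degree ≤ n) (hq : (c %ₘ q).degree ≤ n) (hn : n < (gcd p q).degree) :
    c %ₘ q = c %ₘ p := by
  have hdvd : gcd p q ∣ c %ₘ q - c %ₘ p := by
    rw [← sub_sub_sub_cancel_left _ _ c]
    exact dvd_sub ((gcd_dvd_left p q).trans (dvd_sub_modByMonic c p))
      ((gcd_dvd_right p q).trans (dvd_sub_modByMonic c q))
  refine sub_eq_zero.mp (eq_zero_of_dvd_of_degree_lt hdvd ?_)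
  exact (degree_sub_le _ _).trans_lt ((max_le hq hp).trans_lt hn)

variable {ι : Type*} [DecidableEq ι]

theorem lcm_dvd_mul_lcm_divByMonic_gcd (s : Finset ι) {m : ι → F[X]} {i : ι}
    (hi : (m i).Monic) :
    s.lcm m ∣ m i * (s.erase i).lcm fun j => m j /ₘ gcd (m i) (m j) := by
  refine Finset.lcm_dvd fun j hj => ?_
  by_cases hji : j = i
  · subst hji
    exact dvd_mul_right _ _
  · exact (dvd_mul_divByMonic_gcd hi (m j)).trans
      (mul_dvd_mul_left _ (Finset.dvd_lcm (Finset.mem_erase.mpr ⟨hji, hj⟩)))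

theorem degree_lt_degree_lcm_divByMonic_gcd {s : Finset ι} {m : ι → F[X]} {i : ι} {k : F[X]}
    (hi : (m i).Monic) (hk : (m i * k).degree < (s.lcm m).degree) :
    k.degree < ((s.erase i).lcm fun j => m j /ₘ gcd (m i) (m j)).degree := by
  have hlcm : s.lcm m ≠ 0 := by
    rintro h
    rw [h, degree_zero] at hk
    exact not_lt_bot hk
  have hlcm' : ((s.erase i).lcm fun j => m j /ₘ gcd (m i) (m j)) ≠ 0 := by
    rw [Ne, Finset.lcm_eq_zero_iff]
    rintro ⟨j, hj, hΓ⟩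
    refine hlcm (Finset.lcm_eq_zero_iff.mpr ⟨j, Finset.mem_of_mem_erase hj, ?_⟩)
    rw [← gcd_mul_divByMonic_gcd hi (m j), hΓ, mul_zero]
  have hle := degree_le_of_dvd (lcm_dvd_mul_lcm_divByMonic_gcd s hi) (mul_ne_zero hi.ne_zero hlcm')
  rw [degree_mul] at hk hle
  exact (WithBot.add_lt_add_iff_left (degree_ne_bot.mpr hi.ne_zero)).mp (hk.trans_le hle)

end Polynomial

theorem eq_zero_of_card_filter_not_dvd_le {F : Type*} [Field F] {ι : Type*} {s : Finset ι}
    {Γ : ι → Polynomial F} {a : Polynomial F} (ha : a.degree < (s.lcm Γ).degree)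
    (hcard : (s.filter fun i => ¬ Γ i ∣ a).card ≤ (codeDist s Γ - 1) / 2) : a = 0 := by
  by_contra ha0
  have hdist : codeDist s Γ ≤ (s.filter fun i => ¬ Γ i ∣ a).card :=
    Nat.sInf_le ⟨a, ha0, ha, rfl⟩
  have hne : (s.filter fun i => ¬ Γ i ∣ a).Nonempty := by
    by_contra! hempty
    refine ha0 (eq_zero_of_dvd_of_degree_lt (Finset.lcm_dvd fun i hi => ?_) ha)
    by_contra hdvd
    exact Finset.notMem_empty i (hempty ▸ Finset.mem_filter.mpr ⟨hi, hdvd⟩)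
  have := hne.card_pos
  omega

/-- robust CRT for polynomials with the first modulus as reference.
If `τ < τ_{1(⌊(w⁽¹⁾−1)/2⌋+1)}` (and `τ < deg m_i` for all `i`), then any `c` with
`deg c < deg M` all of whose residues `[c]_{m_i}` have degree at most `τ`
itself has degree at most `τ`. -/
theorem stmt5 {F : Type*} [Field F] {L : ℕ}
    (m : Fin L → Polynomial F)
    (hmonic : ∀ i, (m i).Monic)
    (i0 : Fin L)
    (w1 : ℕ)
    (hw1 : w1 = codeDist (Finset.univ.erase i0)
      (fun j => m j /ₘ gcd (m i0) (m j)))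
    (τ : ℕ)
    (hτ : τ < nthSmallest
      ((Finset.univ.erase i0).val.map fun k => (gcd (m i0) (m k)).natDegree)
      ((w1 - 1) / 2 + 1)) :
    ∀ c : Polynomial F, c.degree < (Finset.univ.lcm m).degree →
      (∀ i, (c %ₘ m i).degree ≤ (τ : WithBot ℕ)) →
      c.degree ≤ (τ : WithBot ℕ) := by
  intro c hc hres
  obtain ⟨k, hk⟩ := dvd_sub_modByMonic c (m i0)
  suffices k = 0 by
    rw [sub_eq_iff_eq_add.mp hk, this, mul_zero, zero_add]
    exact hres i0
  have hkdeg : (m i0 * k).degree < (Finset.univ.lcm m).degree := by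
    have hr : (c %ₘ m i0).degree < (Finset.univ.lcm m).degree :=
      (degree_modByMonic_lt c (hmonic i0)).trans_le
        (degree_le_of_dvd (Finset.dvd_lcm (Finset.mem_univ i0)) (by rintro h; simp [h] at hc))
    exact hk ▸ (degree_sub_le _ _).trans_lt (max_lt hc hr)
  have hgood : ∀ j, τ < (gcd (m i0) (m j)).natDegree → m j /ₘ gcd (m i0) (m j) ∣ k := by
    intro j hj
    refine divByMonic_gcd_dvd_of_dvd_mul (hmonic i0) (hk ▸ ?_)
    rw [← modByMonic_eq_of_degree_lt_degree_gcd (hres i0) (hres j) (coe_lt_degree.mpr hj)]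
    exact dvd_sub_modByMonic c (m j)
  refine eq_zero_of_card_filter_not_dvd_le
    (degree_lt_degree_lcm_divByMonic_gcd (hmonic i0) hkdeg) ?_
  rw [← hw1]
  calc _ ≤ ((Finset.univ.erase i0).filter fun j => (gcd (m i0) (m j)).natDegree ≤ τ).card :=
        Finset.card_le_card (Finset.monotone_filter_right _ fun j _ hj =>
          not_lt.mp fun hlt => hj (hgood j hlt))
    _ = (((Finset.univ.erase i0).val.map fun k => (gcd (m i0) (m k)).natDegree).filter
          (· ≤ τ)).card := by
        rw [Multiset.filter_map, Multiset.card_map, Finset.card_def, Finset.filter_val]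
        rfl
    _ ≤ (w1 - 1) / 2 := card_filter_le_of_lt_nthSmallest hτ
end

section
/- Let d be the code distance of the polynomial remainder code with moduli m_1(x), …, m_L(x), set A = ⌊(d−1)/2⌋, let θ be an integer with 1 ≤ θ ≤ L − 2A, set B = ⌊(L−θ)/2⌋ − A, and let η be a nonnegative integer with η < τ_{(θ)}. Let a(x), b(x) ∈ F[x] with deg(a) < deg(M) and deg(b) < deg(M), and let ã_i(x) (1 ≤ i ≤ L) satisfy deg(ã_i) < deg(m_i); set e_i(x) = ã_i(x) − [a]_{m_i}(x) and f_i(x) = ã_i(x) − [b]_{m_i}(x). If the number of indices i with deg(e_i) > η is at most A, the number of indices i with e_i ≠ 0 is at most A + B, the number of indices i with deg(f_i) > η is at most A, and the number of indices i with f_i ≠ 0 is at most A + B, then a(x) = b(x). (The polynomial remainder code corrects any combination of up to ⌊(d−1)/2⌋ unrestricted residue errors and up to ⌊(L−θ)/2⌋ − ⌊(d−1)/2⌋ residue errors of degree at most η.) -/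
/-!
Suppose `a ≠ b` and put `c = a - b`, a nonzero polynomial of degree `< deg M`, so that
`c %ₘ m i = f i - e i`. The residues where `m i ∤ c` are at least `d > 2A` in number and all
lie where `e` or `f` is nonzero, so they number at most `2(A + B)`; as this exceeds `2A`, the
truncated subtraction in `B` is exact and `2(A + B) ≤ L - θ`. Hence there is an index `j` with
`m j ∤ c` at which both `e j` and `f j` have degree `≤ η`, and there are at least `θ` indices `i`
with `m i ∣ c`; since fewer than `θ` of the `τ`'s are `≤ η`, one of these has `τ i > η`. But
`gcd (m j) (m i)` divides both `c` and `c - (f j - e j)`, so it divides the nonzero residue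
`f j - e j`, of degree `≤ η < τ i`.
-/

open Polynomial
open scoped Classical

open Finset

theorem List.length_filter_le_le_of_lt_getD {l : List ℕ} (hl : l.Pairwise (· ≤ ·)) {i η : ℕ}
    (h : η < l.getD i 0) : (l.filter fun x => x ≤ η).length ≤ i := by
  induction l generalizing i with
  | nil => simp at h
  | cons x l ih =>
    rw [List.pairwise_cons] at hl
    cases i with
    | zero =>
      have hx : η < x := by simpa using h
      simp only [nonpos_iff_eq_zero, List.length_eq_zero_iff, List.filter_eq_nil_iff,
        List.mem_cons, decide_eq_true_eq, not_le]
      rintro y (rfl | hy)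
      exacts [hx, hx.trans_le (hl.1 y hy)]
    | succ i =>
      have := ih hl.2 (by simpa using h)
      rw [List.filter_cons]
      split_ifs
      · rw [List.length_cons]; omega
      · omega

theorem Multiset.card_filter_le_lt_of_lt_nthSmallest {s : Multiset ℕ} {j η : ℕ} (hj : 1 ≤ j)
    (h : η < nthSmallest s j) : (s.filter fun x => x ≤ η).card < j := by
  have hsort : ((s.sort (· ≤ ·) : List ℕ) : Multiset ℕ) = s := Multiset.sort_eq _ _
  have := List.length_filter_le_le_of_lt_getD (Multiset.pairwise_sort _ _) h
  rw [← hsort, Multiset.filter_coe, Multiset.coe_card]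
  omega

theorem exists_mem_lt_of_lt_nthSmallest {ι : Type*} [Fintype ι] {τ : ι → ℕ} {θ η : ℕ}
    (hθ : 1 ≤ θ) (hη : η < nthSmallest (univ.val.map τ) θ) {s : Finset ι} (hs : θ ≤ s.card) :
    ∃ i ∈ s, η < τ i := by
  have hsmall : (univ.filter fun i => τ i ≤ η).card < θ := by
    have := Multiset.card_filter_le_lt_of_lt_nthSmallest hθ hη
    rwa [Multiset.filter_map, Multiset.card_map] at this
  obtain ⟨i, hi, hiτ⟩ := exists_mem_notMem_of_card_lt_card (hsmall.trans_le hs)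
  exact ⟨i, hi, by simpa using hiτ⟩

section Residues

variable {F ι : Type*} [Field F]

theorem codeDist_sub_one_lt_card_filter_not_dvd {s : Finset ι} {m : ι → F[X]} {c : F[X]}
    (hc : c ≠ 0) (hdeg : c.degree < (s.lcm m).degree) :
    codeDist s m - 1 < (s.filter fun i => ¬ m i ∣ c).card := by
  have hdist : codeDist s m ≤ (s.filter fun i => ¬ m i ∣ c).card := Nat.sInf_le ⟨c, hc, hdeg, rfl⟩
  have hpos : (s.filter fun i => ¬ m i ∣ c).Nonempty := by
    rw [filter_nonempty_iff]
    by_contra! h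
    exact (degree_le_of_dvd (Finset.lcm_dvd h) hc).not_gt hdeg
  have := hpos.card_pos
  omega

theorem natDegree_gcd_le_natDegree_modByMonic {p q c : F[X]} (hp : p ∣ c) (hc : c %ₘ q ≠ 0) :
    (gcd q p).natDegree ≤ (c %ₘ q).natDegree := by
  have hq : gcd q p ∣ c %ₘ q - c := (gcd_dvd_left q p).trans (dvd_modByMonic_sub c q)
  exact natDegree_le_of_dvd ((dvd_iff_dvd_of_dvd_sub hq).mpr ((gcd_dvd_right q p).trans hp)) hc

theorem sInf_natDegree_gcd_le_natDegree_modByMonic {m : ι → F[X]} {c : F[X]} {i j : ι}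
    (hj : (m j).Monic) (hi : m i ∣ c) (hc : c %ₘ m j ≠ 0) :
    sInf {n | ∃ k, k ≠ i ∧ n = (gcd (m k) (m i)).natDegree} ≤ (c %ₘ m j).natDegree := by
  have hji : j ≠ i := by
    rintro rfl
    exact hc ((modByMonic_eq_zero_iff_dvd hj).mpr hi)
  refine (Nat.sInf_le ?_).trans (natDegree_gcd_le_natDegree_modByMonic hi hc)
  exact ⟨j, hji, rfl⟩

end Residues

theorem card_filter_ne_le_add {ι M : Type*} [Fintype ι] [AddGroup M] [DecidableEq M]
    (e f : ι → M) :
    (univ.filter fun i => f i ≠ e i).card ≤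
      (univ.filter fun i => e i ≠ 0).card + (univ.filter fun i => f i ≠ 0).card := by
  refine (card_le_card fun i => ?_).trans (card_union_le _ _)
  simp only [mem_filter, mem_univ, true_and, mem_union]
  contrapose!
  rintro ⟨he, hf⟩
  rw [he, hf]

theorem stmt11_general {F : Type*} [Field F] {L : ℕ}
    (m : Fin L → Polynomial F)
    (hmonic : ∀ i, (m i).Monic)
    (d : ℕ) (hd : d = codeDist Finset.univ m)
    (A : ℕ) (hA : A = (d - 1) / 2)
    (θ : ℕ) (hθ1 : 1 ≤ θ)
    (B : ℕ) (hB : B = (L - θ) / 2 - A)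
    (tau : Fin L → ℕ)
    (htau : ∀ j, tau j = sInf {n | ∃ i, i ≠ j ∧ n = (gcd (m i) (m j)).natDegree})
    (η : ℕ)
    (hη : η < nthSmallest (Finset.univ.val.map tau) θ)
    (a b : Polynomial F)
    (ha : a.degree < (Finset.univ.lcm m).degree)
    (hb : b.degree < (Finset.univ.lcm m).degree)
    (r : Fin L → Polynomial F)
    (e f : Fin L → Polynomial F)
    (he : ∀ i, e i = r i - a %ₘ m i)
    (hf : ∀ i, f i = r i - b %ₘ m i)
    (hecount1 : (Finset.univ.filter fun i =>
      (η : WithBot ℕ) < (e i).degree).card ≤ A)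
    (hecount2 : (Finset.univ.filter fun i => e i ≠ 0).card ≤ A + B)
    (hfcount1 : (Finset.univ.filter fun i =>
      (η : WithBot ℕ) < (f i).degree).card ≤ A)
    (hfcount2 : (Finset.univ.filter fun i => f i ≠ 0).card ≤ A + B) :
    a = b := by
  by_contra hab
  have hc : a - b ≠ 0 := sub_ne_zero.mpr hab
  have hcdeg : (a - b).degree < (univ.lcm m).degree := (degree_sub_le a b).trans_lt (max_lt ha hb)
  have hres : ∀ i, (a - b) %ₘ m i = f i - e i := fun i => by rw [he, hf, sub_modByMonic]; ring
  have hS : (univ.filter fun i => ¬ m i ∣ a - b) = univ.filter fun i => f i ≠ e i := by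
    simp only [← modByMonic_eq_zero_iff_dvd (hmonic _), hres, sub_ne_zero]
  have hS_le := card_filter_ne_le_add e f
  have hS_gt : 2 * A < (univ.filter fun i => f i ≠ e i).card := by
    have hdS := codeDist_sub_one_lt_card_filter_not_dvd hc hcdeg
    rw [hS, ← hd] at hdS
    omega
  obtain ⟨j, hjS, hj⟩ := exists_mem_notMem_of_card_lt_card (t := univ.filter fun i => f i ≠ e i)
    (s := (univ.filter fun i => (η : WithBot ℕ) < (e i).degree) ∪
      univ.filter fun i => (η : WithBot ℕ) < (f i).degree)
    ((card_union_le _ _).trans_lt (by omega))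
  simp only [mem_union, mem_filter, mem_univ, true_and, not_or, not_lt] at hjS hj
  have hD : θ ≤ (univ.filter fun i => m i ∣ a - b).card := by
    have := card_filter_add_card_filter_not (s := univ) (p := fun i => m i ∣ a - b)
    rw [hS, card_univ, Fintype.card_fin] at this
    omega
  obtain ⟨i, hiD, hi⟩ := exists_mem_lt_of_lt_nthSmallest hθ1 hη hD
  have hτ := sInf_natDegree_gcd_le_natDegree_modByMonic (hmonic j) (mem_filter.mp hiD).2
    (by rwa [hres, sub_ne_zero])
  have hres_deg : ((a - b) %ₘ m j).natDegree ≤ η := by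
    rw [hres, natDegree_le_iff_degree_le]
    exact (degree_sub_le _ _).trans (max_le hj.2 hj.1)
  rw [← htau] at hτ
  omega

/-- the polynomial remainder code corrects any combination of up to
`A = ⌊(d−1)/2⌋` unrestricted residue errors and up to `B = ⌊(L−θ)/2⌋ − ⌊(d−1)/2⌋`
residue errors of degree at most `η`, where `η < τ_{(θ)}`: any two polynomials
`a, b` of degree less than `deg M` consistent with the received residues in this
way are equal. -/
theorem stmt11 {F : Type*} [Field F] {L : ℕ} (hL : 2 ≤ L)
    (m : Fin L → Polynomial F)
    (hmonic : ∀ i, (m i).Monic)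
    (hdist : Function.Injective m)
    (hdeg : ∀ i, 0 < (m i).degree)
    (hm_lt : ∀ i, (m i).degree < (Finset.univ.lcm m).degree)
    (d : ℕ) (hd : d = codeDist Finset.univ m)
    (A : ℕ) (hA : A = (d - 1) / 2)
    (θ : ℕ) (hθ1 : 1 ≤ θ) (hθ2 : θ ≤ L - 2 * A)
    (B : ℕ) (hB : B = (L - θ) / 2 - A)
    (tau : Fin L → ℕ)
    (htau : ∀ j, tau j = sInf {n | ∃ i, i ≠ j ∧ n = (gcd (m i) (m j)).natDegree})
    (η : ℕ)
    (hη : η < nthSmallest (Finset.univ.val.map tau) θ)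
    (a b : Polynomial F)
    (ha : a.degree < (Finset.univ.lcm m).degree)
    (hb : b.degree < (Finset.univ.lcm m).degree)
    (r : Fin L → Polynomial F)
    (hr : ∀ i, (r i).degree < (m i).degree)
    (e f : Fin L → Polynomial F)
    (he : ∀ i, e i = r i - a %ₘ m i)
    (hf : ∀ i, f i = r i - b %ₘ m i)
    (hecount1 : (Finset.univ.filter fun i =>
      (η : WithBot ℕ) < (e i).degree).card ≤ A)
    (hecount2 : (Finset.univ.filter fun i => e i ≠ 0).card ≤ A + B)
    (hfcount1 : (Finset.univ.filter fun i =>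
      (η : WithBot ℕ) < (f i).degree).card ≤ A)
    (hfcount2 : (Finset.univ.filter fun i => f i ≠ 0).card ≤ A + B) :
    a = b :=
  stmt11_general m hmonic d hd A hA θ hθ1 B hB tau htau η hη a b ha hb r e f he hf hecount1 hecount2
    hfcount1 hfcount2
end

section
/- Let d be the code distance of the polynomial remainder code with moduli m_1(x), …, m_L(x), set A = ⌊(d−1)/2⌋, let θ be an integer with 1 ≤ θ ≤ L − 2A, set B = ⌊(L−θ)/2⌋ − A, let η be a nonnegative integer with η < τ_{(θ)}, and assume A ≤ B. Let a(x), b(x) ∈ F[x] with deg(a) < deg(M) and deg(b) < deg(M), and let r ∈ F^{L·m} be a vector that differs from the coefficient stream s(a) by at most A bursts of width η and differs from the coefficient stream s(b) by at most A bursts of width η. Then a(x) = b(x). (When A ≤ B, the code corrects up to A bursts of width not more than η(θ).) -/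
/-!
Let `c = a - b`. Both streams lie within `A` bursts of `r`, so the stream of `c` is covered by
`2A` bursts of width `η ≤ deg m_i`, each meeting at most two residue blocks; hence at most `4A`
residues of `c` are nonzero. If every nonzero residue block contains a burst start, there are
at most `2A < d` of them, contradicting the code distance. Otherwise some `m_j ∤ c` has a residue
of degree `< η < τ_(θ)`, and every `m_k` with `τ_k ≥ τ_(θ)` shares with `m_j` a factor of
larger degree, so it cannot divide `c` either: at least `L - θ + 1 > 4A` residues are nonzero.
-/

open Polynomial
open scoped Classical

/-- The coefficient stream of `c`: position `i·mdeg + j` (0-indexed) carries the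
coefficient of `x^j` in `[c]_{m_i}`, all moduli having degree `mdeg`. -/
noncomputable def stream {F : Type*} [Field F] {L : ℕ} (mdeg : ℕ)
    (m : Fin L → Polynomial F) (c : Polynomial F) (p : Fin (L * mdeg)) : F :=
  (c %ₘ m ⟨(p : ℕ) / mdeg,
    Nat.div_lt_of_lt_mul (lt_of_lt_of_le p.isLt (le_of_eq (Nat.mul_comm L mdeg)))⟩).coeff ((p : ℕ) % mdeg)

/-- `r` differs from `s` by at most `N` bursts of width `w`: the positions where
they differ are covered by at most `N` blocks of `w` consecutive positions. -/
def DiffBursts {F : Type*} {n : ℕ} (r s : Fin n → F) (N w : ℕ) : Prop :=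
  ∃ starts : Finset ℕ, starts.card ≤ N ∧
    ∀ p : Fin n, r p ≠ s p → ∃ t ∈ starts, t ≤ (p : ℕ) ∧ (p : ℕ) < t + w

lemma List.countP_lt_getD_le {l : List ℕ} (hl : l.Pairwise (· ≤ ·)) (n : ℕ) :
    l.countP (· < l.getD n 0) ≤ n := by
  induction l generalizing n with
  | nil => simp
  | cons x xs ih =>
    rw [List.pairwise_cons] at hl
    cases n with
    | zero =>
      refine (List.countP_eq_zero.mpr ?_).le
      simpa using fun y hy => hl.1 y hy
    | succ n =>
      rw [List.getD_cons_succ, List.countP_cons]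
      have := ih hl.2 n
      split <;> omega

lemma Multiset.countP_lt_nthSmallest {s : Multiset ℕ} {θ : ℕ} (hθ : 1 ≤ θ) :
    s.countP (· < nthSmallest s θ) < θ := by
  have := List.countP_lt_getD_le (s.pairwise_sort (· ≤ ·)) (θ - 1)
  rw [nthSmallest]
  generalize (s.sort (· ≤ ·)).getD (θ - 1) 0 = v at this ⊢
  rw [← s.sort_eq (· ≤ ·), Multiset.coe_countP]
  omega

lemma nthSmallest_le {s : Multiset ℕ} {b : ℕ} (h : ∀ x ∈ s, x ≤ b) (j : ℕ) :
    nthSmallest s j ≤ b := by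
  rw [nthSmallest, List.getD_eq_getElem?_getD]
  cases hx : (s.sort (· ≤ ·))[j - 1]? with
  | none => simp
  | some x => exact h x ((s.mem_sort _).mp (List.mem_of_getElem? hx))

lemma Finset.card_lt_card_filter_nthSmallest_le_add {ι : Type*} (s : Finset ι) (f : ι → ℕ)
    {θ : ℕ} (hθ : 1 ≤ θ) :
    s.card < (s.filter fun i => nthSmallest (s.val.map f) θ ≤ f i).card + θ := by
  have hlt := Multiset.countP_lt_nthSmallest (s := s.val.map f) hθ
  rw [Multiset.countP_map] at hlt
  have := s.card_filter_add_card_filter_not fun i => f i < nthSmallest (s.val.map f) θ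
  simp only [not_lt] at this
  change (s.filter _).card < θ at hlt
  omega

lemma Polynomial.exists_not_dvd_of_degree_lt_lcm {F ι : Type*} [Field F] {s : Finset ι}
    {m : ι → F[X]} {c : F[X]} (hc : c ≠ 0) (hdeg : c.degree < (s.lcm m).degree) :
    ∃ i ∈ s, ¬ m i ∣ c := by
  by_contra! h
  exact (degree_le_of_dvd (Finset.lcm_dvd h) hc).not_gt hdeg

lemma codeDist_le_card_filter_not_dvd {F ι : Type*} [Field F] {s : Finset ι}
    {m : ι → F[X]} {c : F[X]} (hc : c ≠ 0) (hdeg : c.degree < (s.lcm m).degree) :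
    codeDist s m ≤ (s.filter fun i => ¬ m i ∣ c).card :=
  Nat.sInf_le ⟨c, hc, hdeg, rfl⟩

lemma Polynomial.not_dvd_of_degree_modByMonic_lt_gcd {F : Type*} [Field F] {p q c : F[X]}
    (hp : p.Monic) (hpc : ¬ p ∣ c) (hdeg : (c %ₘ p).degree < (gcd p q).natDegree) :
    ¬ q ∣ c := by
  intro hq
  have hg : gcd p q ≠ 0 := fun h => hp.ne_zero ((gcd_eq_zero_iff p q).mp h).1
  refine hpc ((modByMonic_eq_zero_iff_dvd hp).mp
    (eq_zero_of_dvd_of_degree_lt ?_ (by rwa [degree_eq_natDegree hg])))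
  rw [modByMonic_eq_sub_mul_div]
  exact dvd_sub ((gcd_dvd_right p q).trans hq) ((gcd_dvd_left p q).mul_right _)

lemma Polynomial.sInf_natDegree_gcd_le {F ι : Type*} [Field F] (m : ι → F[X]) {k : ι}
    (hk : m k ≠ 0) :
    sInf {n | ∃ i, i ≠ k ∧ n = (gcd (m i) (m k)).natDegree} ≤ (m k).natDegree := by
  by_cases h : ∃ i, i ≠ k
  · obtain ⟨i, hik⟩ := h
    have : sInf {n | ∃ i, i ≠ k ∧ n = (gcd (m i) (m k)).natDegree} ≤
        (gcd (m i) (m k)).natDegree :=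
      Nat.sInf_le ⟨i, hik, rfl⟩
    exact this.trans (natDegree_le_of_dvd (gcd_dvd_right _ _) hk)
  · push Not at h
    simp [h]

lemma Polynomial.filter_le_sInf_natDegree_gcd_subset {F ι : Type*} [Field F] [Fintype ι]
    {m : ι → F[X]} {c : F[X]} {j : ι} (hj : (m j).Monic) (hjc : ¬ m j ∣ c) {v : ℕ}
    (hres : (c %ₘ m j).degree < v) :
    Finset.univ.filter
        (fun k => v ≤ sInf {n | ∃ i, i ≠ k ∧ n = (gcd (m i) (m k)).natDegree}) ⊆
      Finset.univ.filter fun k => ¬ m k ∣ c := by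
  intro k hk
  refine Finset.mem_filter.mpr ⟨Finset.mem_univ k, ?_⟩
  rcases eq_or_ne j k with rfl | hjk
  · exact hjc
  have hτ : sInf {n | ∃ i, i ≠ k ∧ n = (gcd (m i) (m k)).natDegree} ≤
      (gcd (m j) (m k)).natDegree :=
    Nat.sInf_le ⟨j, hjk, rfl⟩
  exact not_dvd_of_degree_modByMonic_lt_gcd hj hjc
    (hres.trans_le (Nat.cast_le.mpr ((Finset.mem_filter.mp hk).2.trans hτ)))

lemma Nat.div_eq_or_succ_div_eq_of_lt_add {n w t j q : ℕ} (hq : q < n) (hw : w ≤ n)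
    (ht : t ≤ j * n + q) (ht' : j * n + q < t + w) : t / n = j ∨ t / n + 1 = j := by
  have hn : 0 < n := by omega
  have h₁ : t / n < j + 1 := (Nat.div_lt_iff_lt_mul hn).mpr (by rw [add_mul]; omega)
  have h₂ : j ≤ t / n + 1 := by
    rw [← Nat.add_div_right t hn, Nat.le_div_iff_mul_le hn]; omega
  omega

lemma Nat.lt_of_div_ne_of_lt_add {n w t j q : ℕ} (hq : q < n) (hj : t / n ≠ j)
    (ht : t ≤ j * n + q) (ht' : j * n + q < t + w) : q < w := by
  have hn : 0 < n := by omega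
  have h₁ : t / n < j + 1 := (Nat.div_lt_iff_lt_mul hn).mpr (by rw [add_mul]; omega)
  have h₂ : t < j * n := (Nat.div_lt_iff_lt_mul hn).mp (by omega)
  omega

lemma DiffBursts.triangle {F : Type*} {n : ℕ} {r s s' : Fin n → F} {N N' w : ℕ}
    (h : DiffBursts r s N w) (h' : DiffBursts r s' N' w) : DiffBursts s s' (N + N') w := by
  obtain ⟨S, hS, hcover⟩ := h
  obtain ⟨S', hS', hcover'⟩ := h'
  refine ⟨S ∪ S', (Finset.card_union_le S S').trans (by omega), fun p hp => ?_⟩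
  by_cases hr : r p = s p
  · obtain ⟨t, ht, hpt⟩ := hcover' p (hr ▸ hp)
    exact ⟨t, Finset.mem_union_right S ht, hpt⟩
  · obtain ⟨t, ht, hpt⟩ := hcover p hr
    exact ⟨t, Finset.mem_union_left S' ht, hpt⟩

lemma Finset.card_le_card_of_forall_val_mem {L : ℕ} {E : Finset (Fin L)} {T : Finset ℕ}
    (h : ∀ j ∈ E, (j : ℕ) ∈ T) : E.card ≤ T.card :=
  Finset.card_le_card_of_injOn Fin.val h Fin.val_injective.injOn

lemma Fin.val_mul_add_lt {L n : ℕ} (j : Fin L) {q : ℕ} (hq : q < n) :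
    (j : ℕ) * n + q < L * n :=
  calc (j : ℕ) * n + q < (j + 1) * n := by rw [add_mul, one_mul]; omega
    _ ≤ L * n := Nat.mul_le_mul_right n j.isLt

section Stream

variable {F : Type*} [Field F] {L mdeg : ℕ} {m : Fin L → F[X]}

lemma stream_mul_add (g : F[X]) (j : Fin L) {q : ℕ} (hq : q < mdeg) :
    stream mdeg m g ⟨j * mdeg + q, Fin.val_mul_add_lt j hq⟩ = (g %ₘ m j).coeff q := by
  have hdiv : ((j : ℕ) * mdeg + q) / mdeg = j := by
    rw [mul_comm, Nat.mul_add_div (by omega), Nat.div_eq_of_lt hq, add_zero]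
  have hmod : ((j : ℕ) * mdeg + q) % mdeg = q := by
    rw [mul_comm, Nat.mul_add_mod, Nat.mod_eq_of_lt hq]
  simp only [stream, hdiv, hmod]

variable (hmonic : ∀ i, (m i).Monic) (hsamedeg : ∀ i, (m i).natDegree = mdeg)
include hmonic hsamedeg

lemma lt_of_coeff_modByMonic_ne_zero {g : F[X]} {j : Fin L} {q : ℕ}
    (h : (g %ₘ m j).coeff q ≠ 0) : q < mdeg := by
  have hlt := (le_degree_of_ne_zero h).trans_lt (degree_modByMonic_lt g (hmonic j))
  rwa [degree_eq_natDegree (hmonic j).ne_zero, hsamedeg j, Nat.cast_lt] at hlt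

variable {a b : F[X]} {S : Finset ℕ} {w : ℕ}
  (hS : ∀ p, stream mdeg m a p ≠ stream mdeg m b p →
    ∃ t ∈ S, t ≤ (p : ℕ) ∧ (p : ℕ) < t + w)
include hS

lemma exists_burst_of_coeff_modByMonic_sub_ne_zero {j : Fin L} {q : ℕ}
    (h : ((a - b) %ₘ m j).coeff q ≠ 0) :
    q < mdeg ∧ ∃ t ∈ S, t ≤ j * mdeg + q ∧ j * mdeg + q < t + w := by
  have hq := lt_of_coeff_modByMonic_ne_zero hmonic hsamedeg h
  refine ⟨hq, hS ⟨_, Fin.val_mul_add_lt j hq⟩ ?_⟩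
  rwa [stream_mul_add a j hq, stream_mul_add b j hq, ← sub_ne_zero, ← coeff_sub,
    ← sub_modByMonic]

lemma degree_modByMonic_sub_lt_of_notMem {j : Fin L} (hj : (j : ℕ) ∉ S.image (· / mdeg)) :
    ((a - b) %ₘ m j).degree < w := by
  refine degree_lt_iff_coeff_zero _ _ |>.mpr fun q hqw => by_contra fun h => ?_
  obtain ⟨hq, t, ht, ht₁, ht₂⟩ :=
    exists_burst_of_coeff_modByMonic_sub_ne_zero hmonic hsamedeg hS h
  have hdiv : t / mdeg ≠ j := fun h' => hj (Finset.mem_image.mpr ⟨t, ht, h'⟩)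
  exact hqw.not_gt (Nat.lt_of_div_ne_of_lt_add hq hdiv ht₁ ht₂)

lemma mem_image_div_of_not_dvd_sub (hw : w ≤ mdeg) {j : Fin L} (hj : ¬ m j ∣ a - b) :
    (j : ℕ) ∈ S.image (· / mdeg) ∪ S.image (· / mdeg + 1) := by
  have hres : (a - b) %ₘ m j ≠ 0 := mt (modByMonic_eq_zero_iff_dvd (hmonic j)).mp hj
  obtain ⟨hq, t, ht, ht₁, ht₂⟩ :=
    exists_burst_of_coeff_modByMonic_sub_ne_zero hmonic hsamedeg hS
      (q := ((a - b) %ₘ m j).natDegree) (by rwa [coeff_natDegree, leadingCoeff_ne_zero])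
  rcases Nat.div_eq_or_succ_div_eq_of_lt_add hq hw ht₁ ht₂ with h | h
  · exact Finset.mem_union_left _ (Finset.mem_image.mpr ⟨t, ht, h⟩)
  · exact Finset.mem_union_right _ (Finset.mem_image.mpr ⟨t, ht, h⟩)

lemma card_filter_not_dvd_sub_le (hw : w ≤ mdeg) :
    (Finset.univ.filter fun i => ¬ m i ∣ a - b).card ≤ 2 * S.card := by
  have hcov := Finset.card_le_card_of_forall_val_mem (E := Finset.univ.filter _) fun j hj =>
    mem_image_div_of_not_dvd_sub hmonic hsamedeg hS hw (Finset.mem_filter.mp hj).2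
  have := Finset.card_union_le (S.image (· / mdeg)) (S.image (· / mdeg + 1))
  have : (S.image (· / mdeg)).card ≤ S.card := Finset.card_image_le
  have : (S.image (· / mdeg + 1)).card ≤ S.card := Finset.card_image_le
  omega

end Stream

open Finset

theorem stmt12_general {F : Type*} [Field F] {L : ℕ}
    (m : Fin L → Polynomial F)
    (hmonic : ∀ i, (m i).Monic)
    (mdeg : ℕ)
    (hsamedeg : ∀ i, (m i).natDegree = mdeg)
    (d : ℕ) (hd : d = codeDist Finset.univ m)
    (A : ℕ) (hA : A = (d - 1) / 2)
    (θ : ℕ) (hθ1 : 1 ≤ θ)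
    (B : ℕ) (hB : B = (L - θ) / 2 - A)
    (tau : Fin L → ℕ)
    (htau : ∀ j, tau j = sInf {n | ∃ i, i ≠ j ∧ n = (gcd (m i) (m j)).natDegree})
    (η : ℕ)
    (hη : η < nthSmallest (Finset.univ.val.map tau) θ)
    (hAB : A ≤ B)
    (a b : Polynomial F)
    (ha : a.degree < (Finset.univ.lcm m).degree)
    (hb : b.degree < (Finset.univ.lcm m).degree)
    (r : Fin (L * mdeg) → F)
    (hra : DiffBursts r (stream mdeg m a) A η)
    (hrb : DiffBursts r (stream mdeg m b) A η) :
    a = b := by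
  by_contra hab
  have hc : a - b ≠ 0 := sub_ne_zero.mpr hab
  have hdeg : (a - b).degree < (univ.lcm m).degree := (degree_sub_le a b).trans_lt (max_lt ha hb)
  set Err := univ.filter fun i => ¬ m i ∣ a - b
  obtain ⟨i, -, hi⟩ := exists_not_dvd_of_degree_lt_lcm hc hdeg
  have hErr_pos : 0 < #Err := card_pos.mpr ⟨i, mem_filter.mpr ⟨mem_univ i, hi⟩⟩
  have hd_le : d ≤ #Err := hd ▸ codeDist_le_card_filter_not_dvd hc hdeg
  obtain ⟨S, hS, hcover⟩ := hra.triangle hrb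
  set v := nthSmallest (univ.val.map tau) θ
  have hv : v ≤ mdeg := nthSmallest_le (by
    simpa [htau, hsamedeg] using fun k => sInf_natDegree_gcd_le m (hmonic k).ne_zero) θ
  have hErr_le : #Err ≤ 2 * #S :=
    card_filter_not_dvd_sub_le hmonic hsamedeg hcover (hη.le.trans hv)
  by_cases hhit : ∀ j ∈ Err, (j : ℕ) ∈ S.image (· / mdeg)
  · have := (card_le_card_of_forall_val_mem hhit).trans card_image_le
    omega
  -- An error block containing no burst start only sees the tail of a burst, so its residue has
  -- degree `< η`; by the gcd bound, every modulus with `τ_k ≥ τ_(θ)` is then in error too.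
  obtain ⟨j, hj, hjS⟩ : ∃ j ∈ Err, (j : ℕ) ∉ S.image (· / mdeg) := by simpa using hhit
  have hlarge : univ.filter (fun k => v ≤ tau k) ⊆ Err := by
    simpa only [← htau] using filter_le_sInf_natDegree_gcd_subset (hmonic j)
      (mem_filter.mp hj).2 ((degree_modByMonic_sub_lt_of_notMem hmonic hsamedeg hcover hjS).trans
        (by exact_mod_cast hη))
  have := card_le_card hlarge
  have : L < #(univ.filter fun k => v ≤ tau k) + θ := by
    have := card_lt_card_filter_nthSmallest_le_add univ tau hθ1
    rwa [card_univ, Fintype.card_fin] at this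
  omega

/-- when `A ≤ B`, the code corrects up to `A` bursts of width at most
`η(θ)`: any two polynomials of degree less than `deg M` whose coefficient streams
both differ from the received vector `r` by at most `A` bursts of width `η` are
equal. -/
theorem stmt12 {F : Type*} [Field F] {L : ℕ} (hL : 2 ≤ L)
    (m : Fin L → Polynomial F)
    (hmonic : ∀ i, (m i).Monic)
    (hdist : Function.Injective m)
    (hdeg : ∀ i, 0 < (m i).degree)
    (hm_lt : ∀ i, (m i).degree < (Finset.univ.lcm m).degree)
    (mdeg : ℕ) (hmdeg : 1 ≤ mdeg)
    (hsamedeg : ∀ i, (m i).natDegree = mdeg)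
    (d : ℕ) (hd : d = codeDist Finset.univ m)
    (A : ℕ) (hA : A = (d - 1) / 2)
    (θ : ℕ) (hθ1 : 1 ≤ θ) (hθ2 : θ ≤ L - 2 * A)
    (B : ℕ) (hB : B = (L - θ) / 2 - A)
    (tau : Fin L → ℕ)
    (htau : ∀ j, tau j = sInf {n | ∃ i, i ≠ j ∧ n = (gcd (m i) (m j)).natDegree})
    (η : ℕ)
    (hη : η < nthSmallest (Finset.univ.val.map tau) θ)
    (hAB : A ≤ B)
    (a b : Polynomial F)
    (ha : a.degree < (Finset.univ.lcm m).degree)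
    (hb : b.degree < (Finset.univ.lcm m).degree)
    (r : Fin (L * mdeg) → F)
    (hra : DiffBursts r (stream mdeg m a) A η)
    (hrb : DiffBursts r (stream mdeg m b) A η) :
    a = b :=
  stmt12_general m hmonic mdeg hsamedeg d hd A hA θ hθ1 B hB tau htau η hη hAB a b ha hb r hra hrb
end

section
/- Let G(x) ∈ F[x] be nonzero and let λ be a nonnegative integer with deg(G) > λ. If a(x), â(x) ∈ F[x] satisfy G(x) ∣ a(x) and deg(a − â) ≤ λ, then a(x) = â(x) − [â]_G(x). (A polynomial that is a multiple of the product-code generator G is exactly recovered from any approximation within degree λ by subtracting the remainder modulo G.) -/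
open Polynomial

/-- a multiple `a` of the product-code generator `G` is exactly
recovered from any approximation `â` with `deg(a − â) ≤ λ < deg G` by subtracting
the remainder of `â` modulo `G`. -/
theorem stmt15 {F : Type*} [Field F] (G : Polynomial F) (hG : G ≠ 0)
    (lam : ℕ) (hlam : (lam : WithBot ℕ) < G.degree)
    (a ahat : Polynomial F)
    (hdvd : G ∣ a)
    (hclose : (a - ahat).degree ≤ (lam : WithBot ℕ)) :
    a = ahat - ahat % G := by
  have hdeg : (ahat - a).degree < G.degree := by
    have : (ahat - a).degree = (a - ahat).degree := by
      rw [← neg_sub, degree_neg]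
    exact this ▸ lt_of_le_of_lt hclose hlam
  have h1 : ahat % G = ahat - a := by
    have : (ahat - a) % G = ahat - a := (Polynomial.mod_eq_self_iff hG).mpr hdeg
    have ha : a % G = 0 := by
      rw [Polynomial.mod_def, Polynomial.modByMonic_eq_zero_iff_dvd
        (Polynomial.monic_mul_leadingCoeff_inv hG)]
      exact (IsUnit.mul_right_dvd (Polynomial.isUnit_C.mpr
        (isUnit_iff_ne_zero.mpr (inv_ne_zero (Polynomial.leadingCoeff_ne_zero.mpr hG))))).mpr hdvd
    calc ahat % G = (a + (ahat - a)) % G := by ring_nf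
      _ = a % G + (ahat - a) % G := by
        simp only [Polynomial.mod_def, Polynomial.add_modByMonic]
      _ = ahat - a := by rw [ha, zero_add, this]
  rw [h1]; ring
end

section
/- Let i ∈ {2, …, L} and d_{1i}(x) = gcd(m_1(x), m_i(x)) (taken monic). Let a(x), e_1(x), e_i(x) ∈ F[x] with deg(e_i − e_1) < deg(d_{1i}), and set ã_1(x) = [a]_{m_1}(x) + e_1(x) and ã_i(x) = [a]_{m_i}(x) + e_i(x). Then ã_i(x) − ã_1(x) − [ã_i − ã_1]_{d_{1i}}(x) = [a]_{m_i}(x) − [a]_{m_1}(x); equivalently, the computable estimate q̂_{i1}(x) = (ã_i(x) − ã_1(x) − [ã_i − ã_1]_{d_{1i}}(x))/d_{1i}(x) equals the true quotient q_{i1}(x) = ([a]_{m_i}(x) − [a]_{m_1}(x))/d_{1i}(x). -/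
open Polynomial
open scoped Classical

/-! Since `d₁ᵢ` divides both `m₁` and `mᵢ`, it divides `[a]_{mᵢ} − [a]_{m₁}`; hence
`ãᵢ − ã₁` is that multiple of `d₁ᵢ` plus `eᵢ − e₁`, and the degree bound makes `eᵢ − e₁`
exactly the remainder of `ãᵢ − ã₁` modulo `d₁ᵢ`. -/

namespace Polynomial

variable {R : Type*} [CommRing R]

theorem dvd_modByMonic_sub_modByMonic {d p q : R[X]} (hp : d ∣ p) (hq : d ∣ q) (a : R[X]) :
    d ∣ a %ₘ q - a %ₘ p := by
  have hsub : a %ₘ q - a %ₘ p = p * (a /ₘ p) - q * (a /ₘ q) := by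
    linear_combination modByMonic_add_div a q - modByMonic_add_div a p
  rw [hsub]
  exact dvd_sub (hp.mul_right _) (hq.mul_right _)

theorem add_sub_modByMonic_of_dvd [Nontrivial R] {d x e : R[X]} (hd : d.Monic) (hx : d ∣ x)
    (he : e.degree < d.degree) : x + e - (x + e) %ₘ d = x := by
  rw [add_modByMonic, (modByMonic_eq_zero_iff_dvd hd).mpr hx,
    (modByMonic_eq_self_iff hd).mpr he, zero_add, add_sub_cancel_right]

end Polynomial

/-- if the two residue errors `e_1, e_i` satisfy
`deg(e_i − e_1) < deg d_{1i}` with `d_{1i} = gcd(m_1, m_i)`, then the computable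
quantity `ã_i − ã_1 − [ã_i − ã_1]_{d_{1i}}` equals `[a]_{m_i} − [a]_{m_1}`;
equivalently, the computable estimate `q̂_{i1}` equals the true quotient
`q_{i1}`. -/
theorem stmt17 {F : Type*} [Field F] {L : ℕ} (hL : 2 ≤ L)
    (m : Fin L → Polynomial F)
    (hmonic : ∀ i, (m i).Monic)
    (i : Fin L)
    (a e1 ei : Polynomial F)
    (hsmall : (ei - e1).degree < (gcd (m ⟨0, by omega⟩) (m i)).degree)
    (r1 ri : Polynomial F)
    (hr1 : r1 = a %ₘ m ⟨0, by omega⟩ + e1)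
    (hri : ri = a %ₘ m i + ei) :
    ri - r1 - (ri - r1) %ₘ gcd (m ⟨0, by omega⟩) (m i) =
      a %ₘ m i - a %ₘ m ⟨0, by omega⟩ ∧
    (ri - r1 - (ri - r1) %ₘ gcd (m ⟨0, by omega⟩) (m i)) /ₘ
        gcd (m ⟨0, by omega⟩) (m i) =
      (a %ₘ m i - a %ₘ m ⟨0, by omega⟩) /ₘ gcd (m ⟨0, by omega⟩) (m i) := by
  set m1 := m ⟨0, by omega⟩
  set d := gcd m1 (m i)
  have hd_ne : d ≠ 0 := fun h => (hmonic _).ne_zero ((gcd_eq_zero_iff _ _).mp h).1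
  have hd_monic : d.Monic := by simpa only [d, normalize_gcd] using monic_normalize hd_ne
  have hdiff : ri - r1 = (a %ₘ m i - a %ₘ m1) + (ei - e1) := by
    rw [hri, hr1]; ring
  have key : ri - r1 - (ri - r1) %ₘ d = a %ₘ m i - a %ₘ m1 := by
    rw [hdiff]
    exact add_sub_modByMonic_of_dvd hd_monic
      (dvd_modByMonic_sub_modByMonic (gcd_dvd_left _ _) (gcd_dvd_right _ _) a) hsmall
  exact ⟨key, by rw [key]⟩
end

section
/- Let t be a nonnegative integer, λ a nonnegative integer, a(x) ∈ F[x], and b_1(x), …, b_{2t+1}(x) ∈ F[x]. Suppose that at least t + 1 indices i ∈ {1, …, 2t+1} satisfy deg(b_i − a) ≤ λ. Then for every index j for which there exists a set S ⊆ {1, …, 2t+1} with |S| ≥ t + 1, j ∈ S, and deg(b_i − b_k) ≤ λ for all i, k ∈ S, one has deg(b_j − a) ≤ λ. (Correctness of the majority selection rule: any member of a mutually λ-close subset of size at least t + 1 among 2t + 1 candidate reconstructions is within degree λ of the true polynomial.) -/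
open Polynomial
open scoped Classical

/-- correctness of the majority selection rule. If among `2t+1`
candidate reconstructions at least `t+1` are within degree `λ` of the true
polynomial `a`, then any member of a mutually `λ`-close subset of size at least
`t+1` is within degree `λ` of `a`. -/
theorem stmt18 {F : Type*} [Field F] (t lam : ℕ)
    (a : Polynomial F) (b : Fin (2 * t + 1) → Polynomial F)
    (hmaj : t + 1 ≤
      (Finset.univ.filter fun i => (b i - a).degree ≤ (lam : WithBot ℕ)).card) :
    ∀ j : Fin (2 * t + 1),
      (∃ S : Finset (Fin (2 * t + 1)), t + 1 ≤ S.card ∧ j ∈ S ∧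
        ∀ i ∈ S, ∀ k ∈ S, (b i - b k).degree ≤ (lam : WithBot ℕ)) →
      (b j - a).degree ≤ (lam : WithBot ℕ) := by
  rintro j ⟨S, hScard, hjS, hS⟩
  set G := Finset.univ.filter fun i => (b i - a).degree ≤ (lam : WithBot ℕ) with hG
  have hinter : (S ∩ G).Nonempty := by
    rw [← Finset.card_pos]
    have h1 : S.card + G.card ≤ (S ∪ G).card + (S ∩ G).card := by
      rw [Finset.card_union_add_card_inter]
    have h2 : (S ∪ G).card ≤ 2 * t + 1 := by
      simpa using Finset.card_le_card (Finset.subset_univ (S ∪ G))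
    omega
  obtain ⟨i, hi⟩ := hinter
  have hiS : i ∈ S := (Finset.mem_inter.mp hi).1
  have hiG : (b i - a).degree ≤ (lam : WithBot ℕ) := by
    have := (Finset.mem_inter.mp hi).2
    simpa [hG] using this
  have : b j - a = (b j - b i) + (b i - a) := by ring
  rw [this]
  exact le_trans (degree_add_le _ _) (max_le (hS j hjS i hiS) hiG)
end
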